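/- arXiv:2510.15384 — 2 statements merged into one kernel-verified Lean document; each statement's English description precedes it below -/
import Mathlib

section
/- Suppose a coalitional game value function v : 2^N → ℝ is supermodular, i.e., v(S ∪ {j}) - v(S) ≥ v(R ∪ {j}) - v(R) for all R ⊆ S ⊆ N and j ∉ S. Then the core of the game is nonempty: there exists a payoff vector x : N → ℝ with Σ_{i∈N} x_i = v(N) and Σ_{i∈S} x_i ≥ v(S) for all S ⊆ N. -/
/-! Order the players and pay each one its marginal contribution `v (P ∪ {i}) - v P` to the set
`P` of its predecessors. These payments telescope to `v N`. For a coalition `S` with largest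
member `m`, supermodularity applied to `S \ {m} ⊆ P` shows that `m` is paid at least its marginal
contribution to `S \ {m}`, so by induction on `S` the members of `S` receive at least `v S`. -/

open Finset

namespace CoalitionalGame

variable {ι : Type*} [Fintype ι] [LinearOrder ι] [DecidableEq ι]

def predecessors (i : ι) : Finset ι := {j | j < i}

def marginalVector (v : Finset ι → ℝ) (i : ι) : ℝ :=
  v (insert i (predecessors i)) - v (predecessors i)

theorem sum_marginalVector_of_isLowerSet (v : Finset ι → ℝ) (hempty : v ∅ = 0)
    {S : Finset ι} (hS : IsLowerSet (S : Set ι)) : ∑ i ∈ S, marginalVector v i = v S := by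
  induction S using Finset.induction_on_max with
  | empty => simp [hempty]
  | insert m S hlt ih =>
    have hm : m ∉ S := fun h => lt_irrefl m (hlt m h)
    have hpred : predecessors m = S := by
      ext j
      simp only [predecessors, mem_filter, mem_univ, true_and]
      refine ⟨fun hj => ?_, hlt j⟩
      have := hS (le_of_lt hj) (mem_insert_self m S)
      exact (mem_insert.mp this).resolve_left hj.ne
    have hS' : IsLowerSet (S : Set ι) := fun i j hji hi =>
      (mem_insert.mp (hS hji (mem_insert_of_mem hi))).resolve_left
        (lt_of_le_of_lt hji (hlt i hi)).ne
    rw [sum_insert hm, ih hS', marginalVector, hpred]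
    ring

theorem le_sum_marginalVector (v : Finset ι → ℝ) (hempty : v ∅ = 0)
    (hsuper : ∀ R S : Finset ι, R ⊆ S → ∀ j, j ∉ S →
      v (insert j S) - v S ≥ v (insert j R) - v R) (S : Finset ι) :
    v S ≤ ∑ i ∈ S, marginalVector v i := by
  induction S using Finset.induction_on_max with
  | empty => simp [hempty]
  | insert m S hlt ih =>
    have hm : m ∉ S := fun h => lt_irrefl m (hlt m h)
    have hsub : S ⊆ predecessors m := fun j hj => by simpa [predecessors] using hlt j hj
    have hmarg := hsuper S (predecessors m) hsub m (by simp [predecessors])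
    rw [sum_insert hm, marginalVector]
    linarith

end CoalitionalGame

open CoalitionalGame in
/-- a supermodular (convex) TU game has a nonempty core. -/
theorem stmt3 {ι : Type*} [Fintype ι] [DecidableEq ι]
    (v : Finset ι → ℝ) (hempty : v ∅ = 0)
    (hsuper : ∀ R S : Finset ι, R ⊆ S → ∀ j, j ∉ S →
      v (insert j S) - v S ≥ v (insert j R) - v R) :
    ∃ x : ι → ℝ, (∑ i, x i = v Finset.univ) ∧
      ∀ S : Finset ι, ∑ i ∈ S, x i ≥ v S := by
  let _ : LinearOrder ι := LinearOrder.lift' _ (Fintype.equivFin ι).injective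
  exact ⟨marginalVector v, sum_marginalVector_of_isLowerSet v hempty (by simp [isLowerSet_univ]),
    le_sum_marginalVector v hempty hsuper⟩
end

section
/- In a convex (supermodular) TU game on finite player set N with any fixed enumeration of the players, the marginal-contribution vector x_i = v(P_i ∪ {i}) - v(P_i), where P_i is the set of players preceding i in the enumeration, satisfies both efficiency Σ_{i∈N} x_i = v(N) and coalitional rationality Σ_{i∈S} x_i ≥ v(S) for all S ⊆ N. -/
/-!
Order the players and add them one at a time: the marginal vector pays each player the increment
it brings to the coalition of its predecessors, so its total telescopes to `v N - v ∅`. For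
coalitional rationality, build `S` in the same order; when the largest member `j` of `S` joins,
its predecessors inside `S` form a subset of all its predecessors, so by supermodularity its
increment to `S` is at most the increment it is paid.
-/

open Finset

namespace CooperativeGame

variable {α β : Type*} [LinearOrder α] [LocallyFiniteOrderBot α]

/-- Convexity of the TU game `v`. -/
def IsSupermodular [AddCommGroup β] [LE β] (v : Finset α → β) : Prop :=
  ∀ R S : Finset α, R ⊆ S → ∀ j, j ∉ S → v (insert j R) - v R ≤ v (insert j S) - v S

def marginalVector [Sub β] (v : Finset α → β) (i : α) : β :=
  v (insert i (Iio i)) - v (Iio i)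

lemma Iio_eq_of_isLowerSet_insert {a : α} {s : Finset α} (has : ∀ x ∈ s, x < a)
    (hlow : IsLowerSet (↑(insert a s) : Set α)) : Iio a = s := by
  ext x
  simp only [mem_Iio]
  refine ⟨fun hx => ?_, has x⟩
  have hx' : x ∈ insert a s := hlow hx.le (by simp)
  exact (mem_insert.mp hx').resolve_left hx.ne

lemma isLowerSet_of_isLowerSet_insert {a : α} {s : Finset α} (has : ∀ x ∈ s, x < a)
    (hlow : IsLowerSet (↑(insert a s) : Set α)) : IsLowerSet (↑s : Set α) := by
  rw [← Iio_eq_of_isLowerSet_insert has hlow, coe_Iio]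
  exact isLowerSet_Iio a

theorem sum_marginalVector_of_isLowerSet [AddCommGroup β] (v : Finset α → β) {S : Finset α}
    (hS : IsLowerSet (↑S : Set α)) : ∑ i ∈ S, marginalVector v i = v S - v ∅ := by
  induction S using Finset.induction_on_max with
  | empty => simp
  | insert a s has ih =>
    have ha : a ∉ s := fun h => (has a h).false
    rw [sum_insert ha, ih (isLowerSet_of_isLowerSet_insert has hS), marginalVector,
      Iio_eq_of_isLowerSet_insert has hS]
    abel

theorem sum_univ_marginalVector [Fintype α] [AddCommGroup β] (v : Finset α → β) :
    ∑ i, marginalVector v i = v univ - v ∅ :=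
  sum_marginalVector_of_isLowerSet v (by simpa using isLowerSet_univ)

theorem sub_le_sum_marginalVector [AddCommGroup β] [PartialOrder β] [IsOrderedAddMonoid β]
    {v : Finset α → β} (hv : IsSupermodular v) (S : Finset α) :
    v S - v ∅ ≤ ∑ i ∈ S, marginalVector v i := by
  induction S using Finset.induction_on_max with
  | empty => simp
  | insert a s has ih =>
    have ha : a ∉ s := fun h => (has a h).false
    have hstep : v (insert a s) - v s ≤ marginalVector v a :=
      hv s (Iio a) (fun x hx => mem_Iio.mpr (has x hx)) a (by simp)
    calc v (insert a s) - v ∅ = (v (insert a s) - v s) + (v s - v ∅) := by abel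
      _ ≤ marginalVector v a + ∑ i ∈ s, marginalVector v i := add_le_add hstep ih
      _ = ∑ i ∈ insert a s, marginalVector v i := (sum_insert ha).symm

end CooperativeGame

open CooperativeGame in
/-- in a convex TU game on players Fin n (with its natural
    enumeration), the marginal-contribution vector
    x_i = v(P_i ∪ {i}) - v(P_i), P_i = predecessors of i,
    is efficient and coalitionally rational. -/
theorem stmt4 {n : ℕ} (v : Finset (Fin n) → ℝ) (hempty : v ∅ = 0)
    (hsuper : ∀ R S : Finset (Fin n), R ⊆ S → ∀ j, j ∉ S →
      v (insert j S) - v S ≥ v (insert j R) - v R) :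
    (∑ i, (v (insert i (Finset.Iio i)) - v (Finset.Iio i)) = v Finset.univ) ∧
    ∀ S : Finset (Fin n),
      ∑ i ∈ S, (v (insert i (Finset.Iio i)) - v (Finset.Iio i)) ≥ v S := by
  refine ⟨?_, fun S => ?_⟩
  · simpa only [marginalVector, hempty, sub_zero] using sum_univ_marginalVector v
  · simpa only [marginalVector, hempty, sub_zero] using sub_le_sum_marginalVector hsuper S
end
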